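/- arXiv:1710.08068 — 2 statements merged into one kernel-verified Lean document; each statement's English description precedes it below -/
import Mathlib

section
/- Let A be a locally noetherian Grothendieck category in which every nonzero object has an associated point, and let A' be the full subcategory of A_fg consisting of objects all of whose support points satisfy condition (*). Then for a full and replete subcategory C of A' the following are equivalent: (1) C is a Serre subcategory of A'; (2) C is a torsion class in A' (closed under extensions and quotients); (3) C is a thick subcategory of A' (an abelian subcategory with exact inclusion, closed under extensions); (4) C is a narrow subcategory of A' (closed under extensions and cokernels). -/
/-!
Common set-up: Rosenberg's spectrum of an abelian category.

For objects `X Y` of an abelian category `C`, `X ≺ Y` means that `X` is a subquotient of a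
finite direct sum of copies of `Y`; `X ≈ Y` means `X ≺ Y ≺ X`.  A nonzero object `P` is
*spectral* if it is `≈`-equivalent to each of its nonzero subobjects, and the spectrum
`𝔖pec(C)` is the collection of `≈`-equivalence classes `⟨P⟩` of spectral objects.
`Supp(M) = {⟨P⟩ : P ≺ M}` and `Ass(M) = {⟨P⟩ : some spectral object of class ⟨P⟩ embeds in M}`.
-/

open CategoryTheory CategoryTheory.Limits

attribute [local instance] CategoryTheory.Abelian.hasFiniteBiproducts
attribute [local instance] CategoryTheory.Limits.hasBinaryBiproducts_of_finite_biproducts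

universe v u

namespace RosenbergSpec

variable (C : Type u) [Category.{v} C] [Abelian C]

/-- `X ≺ Y` : `X` is a subquotient of a finite direct sum of copies of `Y`. -/
def Prec (X Y : C) : Prop :=
  ∃ n : ℕ, 0 < n ∧ ∃ (S : C) (ι : S ⟶ ⨁ (fun _ : Fin n => Y)) (π : S ⟶ X),
    Mono ι ∧ Epi π

/-- `X ≈ Y` : mutual subquotient equivalence. -/
def PrecEquiv (X Y : C) : Prop := Prec C X Y ∧ Prec C Y X

/-- A nonzero object is spectral if it is `≈`-equivalent to each of its nonzero subobjects. -/
def IsSpectral (P : C) : Prop :=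
  ¬ IsZero P ∧ ∀ (Q : C) (f : Q ⟶ P), Mono f → ¬ IsZero Q → PrecEquiv C Q P

/-- The type of spectral objects of `C`. -/
def SpectralObj := {P : C // IsSpectral C P}

/-- The spectrum `𝔖pec(C)` : equivalence classes `⟨P⟩` of spectral objects. -/
def SpecPoint := Quot (fun P Q : SpectralObj C => PrecEquiv C P.1 Q.1)

/-- The point `⟨P⟩` of the spectrum attached to a spectral object `P`. -/
def pt (P : SpectralObj C) : SpecPoint C := Quot.mk _ P

/-- `Supp(M) = {⟨P⟩ : P spectral, P ≺ M}`. -/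
def supp (M : C) : Set (SpecPoint C) :=
  {x | ∃ P : SpectralObj C, pt C P = x ∧ Prec C P.1 M}

/-- `Ass(M) = {⟨P⟩ : some spectral object of class ⟨P⟩ is a subobject of M}`. -/
def ass (M : C) : Set (SpecPoint C) :=
  {x | ∃ P : SpectralObj C, pt C P = x ∧ ∃ f : P.1 ⟶ M, Mono f}

/-- A subset of the spectrum is specialization closed if together with any point `⟨P⟩`
it contains all of `Supp(P)`. -/
def SpecializationClosed (S : Set (SpecPoint C)) : Prop :=
  ∀ P : SpectralObj C, pt C P ∈ S → supp C P.1 ⊆ S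

/-- Every nonzero object of `C` has an associated point. -/
def HasAssociatedPoints : Prop :=
  ∀ M : C, ¬ IsZero M → (ass C M).Nonempty

/-- A Grothendieck category is locally noetherian if it admits a small generating family
of noetherian objects. -/
def LocallyNoetherian : Prop :=
  ∃ (ι : Type v) (G : ι → C), ObjectProperty.IsSeparating (fun X : C => X ∈ Set.range G) ∧ ∀ i, IsNoetherianObject (G i)

/-- `0 ⟶ X ⟶ M ⟶ Y ⟶ 0` is a short exact sequence. -/
def IsShortExact {X M Y : C} (f : X ⟶ M) (g : M ⟶ Y) : Prop :=
  ∃ w : f ≫ g = 0, (ShortComplex.mk f g w).ShortExact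

/-- `f : N ⟶ M` exhibits `N` as an essential subobject of `M`. -/
def IsEssential {N M : C} (f : N ⟶ M) : Prop :=
  Mono f ∧ ∀ (K : C) (g : K ⟶ M), Mono g → ¬ IsZero K → ¬ IsZero (pullback f g)

/-- `i : P ⟶ E` exhibits `E` as an injective hull of `P`. -/
def IsInjectiveHull {P E : C} (i : P ⟶ E) : Prop :=
  Injective E ∧ IsEssential C i

/-- A torsion pair `(T, F)` on an abelian category: both classes are replete, all maps from
`T` to `F` vanish, and every object is an extension of an object of `F` by an object of `T`. -/
structure IsTorsionPair (T F : Set C) : Prop where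
  repleteT : ∀ X Y : C, X ∈ T → Nonempty (X ≅ Y) → Y ∈ T
  repleteF : ∀ X Y : C, X ∈ F → Nonempty (X ≅ Y) → Y ∈ F
  hom_zero : ∀ X ∈ T, ∀ Y ∈ F, ∀ f : X ⟶ Y, f = 0
  exists_ses : ∀ M : C, ∃ (X Y : C) (f : X ⟶ M) (g : M ⟶ Y),
    IsShortExact C f g ∧ X ∈ T ∧ Y ∈ F

end RosenbergSpec

namespace RosenbergSpec

variable (C : Type u) [Category.{v} C] [Abelian C]

/-- Condition `(*)` for a point `x = ⟨P⟩` of the spectrum : for every spectral object `Q`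
with `⟨Q⟩ = x` and every finitely generated object `M` with `x ∈ Supp(M)`,
`Hom(M, Q) ≠ 0`. -/
def StarCond (x : SpecPoint C) : Prop :=
  ∀ Q : SpectralObj C, pt C Q = x →
    ∀ M : C, IsNoetherianObject M → x ∈ supp C M → ∃ f : M ⟶ Q.1, f ≠ 0

/-- The subcategory `A'` of `A_fg` : finitely generated objects all of whose support points
satisfy condition `(*)`. -/
def Aprime : Set C :=
  {M : C | IsNoetherianObject M ∧ ∀ x ∈ supp C M, StarCond C x}

/-- A Serre subcategory of the abelian category determined by `A'` : contains `0` and is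
closed under subobjects, quotients and extensions taken inside `A'`. -/
def IsSerreIn (A' 𝒞 : Set C) : Prop :=
  (∀ Z : C, IsZero Z → Z ∈ 𝒞) ∧
  (∀ (X Y : C) (f : X ⟶ Y), Mono f → Y ∈ 𝒞 → X ∈ A' → X ∈ 𝒞) ∧
  (∀ (X Y : C) (f : X ⟶ Y), Epi f → X ∈ 𝒞 → Y ∈ A' → Y ∈ 𝒞) ∧
  (∀ (X M Y : C) (f : X ⟶ M) (g : M ⟶ Y),
    IsShortExact C f g → X ∈ 𝒞 → Y ∈ 𝒞 → M ∈ A' → M ∈ 𝒞)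

/-- A torsion class in `A'` : contains `0` and is closed under extensions and quotients
taken inside `A'`. -/
def IsTorsionClassIn (A' 𝒞 : Set C) : Prop :=
  (∀ Z : C, IsZero Z → Z ∈ 𝒞) ∧
  (∀ (X Y : C) (f : X ⟶ Y), Epi f → X ∈ 𝒞 → Y ∈ A' → Y ∈ 𝒞) ∧
  (∀ (X M Y : C) (f : X ⟶ M) (g : M ⟶ Y),
    IsShortExact C f g → X ∈ 𝒞 → Y ∈ 𝒞 → M ∈ A' → M ∈ 𝒞)

/-- A thick subcategory of `A'` : a full abelian subcategory (contains `0`, closed under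
kernels and cokernels) that is closed under extensions taken inside `A'`. -/
def IsThickIn (A' 𝒞 : Set C) : Prop :=
  (∀ Z : C, IsZero Z → Z ∈ 𝒞) ∧
  (∀ (X Y : C) (f : X ⟶ Y), X ∈ 𝒞 → Y ∈ 𝒞 → kernel f ∈ 𝒞) ∧
  (∀ (X Y : C) (f : X ⟶ Y), X ∈ 𝒞 → Y ∈ 𝒞 → cokernel f ∈ 𝒞) ∧
  (∀ (X M Y : C) (f : X ⟶ M) (g : M ⟶ Y),
    IsShortExact C f g → X ∈ 𝒞 → Y ∈ 𝒞 → M ∈ A' → M ∈ 𝒞)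

/-- A narrow subcategory of `A'` : contains `0` and is closed under cokernels and under
extensions taken inside `A'`. -/
def IsNarrowIn (A' 𝒞 : Set C) : Prop :=
  (∀ Z : C, IsZero Z → Z ∈ 𝒞) ∧
  (∀ (X Y : C) (f : X ⟶ Y), X ∈ 𝒞 → Y ∈ 𝒞 → cokernel f ∈ 𝒞) ∧
  (∀ (X M Y : C) (f : X ⟶ M) (g : M ⟶ Y),
    IsShortExact C f g → X ∈ 𝒞 → Y ∈ 𝒞 → M ∈ A' → M ∈ 𝒞)

/-!
Both non-trivial implications are noetherian inductions on the subobjects of a finitely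
generated object, driven by one observation: if `M ∈ A'` and `W ≺ M` is nonzero, then an
associated point `P ↪ W` lies in `Supp(M)`, so condition `(*)` gives a nonzero map
`M → P ↪ W`.

For a torsion class `𝒞`, `M ∈ 𝒞` and `N ∈ A'` with `N ≺ M`: a nonzero quotient `N/I` receives a
nonzero map from `M`; its image lies in `𝒞` (a quotient of `M`), its cokernel is a strictly
smaller quotient `N/I'` of `N`, hence lies in `𝒞` by induction, and `N/I` is an extension of the
two. Thus `𝒞` is closed under subobjects (even under `≺`), and hence is Serre and thick.

For a narrow `𝒞`, `M ∈ 𝒞` and an epimorphism `M ↠ N` factoring through `M/s ∈ 𝒞`: if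
`M/s → N` is not an isomorphism, its kernel receives a nonzero map from `M/s`, and the cokernel
of the resulting nonzero endomorphism of `M/s` is a strictly smaller quotient `M/s'` in `𝒞`
through which `M ↠ N` still factors. Thus `𝒞` is closed under quotients, i.e. a torsion class.
-/

section

variable {C}

lemma prec_of_mono {X Y : C} (f : X ⟶ Y) [Mono f] : Prec C X Y :=
  ⟨1, Nat.one_pos, X, biproduct.lift fun _ => f, 𝟙 X,
    mono_of_mono_fac (biproduct.lift_π (fun _ => f) 0), inferInstance⟩

lemma prec_of_epi {X Y : C} (f : Y ⟶ X) [Epi f] : Prec C X Y :=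
  ⟨1, Nat.one_pos, Y, biproduct.lift fun _ => 𝟙 Y, f,
    mono_of_mono_fac (biproduct.lift_π (fun _ => 𝟙 Y) 0), inferInstance⟩

/-- From `Yⁿ ↩ S ↠ X` and `Zᵐ ↩ T ↠ Y`, the pullback of `S ↪ Yⁿ ↞ Tⁿ` embeds in `Tⁿ ↪ Zⁿᵐ`
and maps onto `X`. -/
lemma Prec.trans {X Y Z : C} (h₁ : Prec C X Y) (h₂ : Prec C Y Z) : Prec C X Z := by
  obtain ⟨n, hn, S, ι, π, hι, hπ⟩ := h₁
  obtain ⟨m, hm, T, κ, ρ, hκ, hρ⟩ := h₂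
  let ρn : (⨁ fun _ : Fin n => T) ⟶ ⨁ fun _ : Fin n => Y := biproduct.map fun _ => ρ
  let κn : (⨁ fun _ : Fin n => T) ⟶ ⨁ fun _ : Fin n => ⨁ fun _ : Fin m => Z :=
    biproduct.map fun _ => κ
  have : Epi ρn := biproduct.map_epi _
  have : Mono κn := biproduct.map_mono _
  let e : (⨁ fun _ : Fin n => ⨁ fun _ : Fin m => Z) ≅ ⨁ fun _ : Fin (n * m) => Z :=
    biproductBiproductIso (fun _ : Fin n => Fin m) (fun _ _ => Z) ≪≫
      biproduct.whiskerEquiv ((Equiv.sigmaEquivProd (Fin n) (Fin m)).trans finProdFinEquiv)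
        fun _ => Iso.refl Z
  exact ⟨n * m, Nat.mul_pos hn hm, pullback ι ρn, pullback.snd ι ρn ≫ κn ≫ e.hom,
    pullback.fst ι ρn ≫ π, mono_comp _ _, epi_comp _ _⟩

lemma Subobject.le_of_arrow_comp_cokernel_π {M : C} {s t : Subobject M}
    (w : s.arrow ≫ cokernel.π t.arrow = 0) : s ≤ t :=
  Subobject.le_of_comm (Abelian.monoLift t.arrow s.arrow w) (Abelian.monoLift_comp _ _ _)

lemma Subobject.le_of_pullback_obj_le {M N : C} (p : M ⟶ N) [Epi p] {s t : Subobject N}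
    (h : (Subobject.pullback p).obj s ≤ (Subobject.pullback p).obj t) : s ≤ t := by
  apply Subobject.le_of_arrow_comp_cokernel_π
  have : Epi (Subobject.pullbackπ p s) :=
    Abelian.epi_fst_of_isLimit _ _ (Subobject.isPullback p s).isLimit
  rw [← cancel_epi (Subobject.pullbackπ p s), comp_zero, (Subobject.isPullback p s).w_assoc,
    ← Subobject.ofLE_arrow h, Category.assoc, ← (Subobject.isPullback p t).w_assoc,
    cokernel.condition, comp_zero, comp_zero]

lemma isNoetherianObject_of_epi {M N : C} (p : M ⟶ N) [Epi p] [IsNoetherianObject M] :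
    IsNoetherianObject N := by
  have hinj : Function.Injective (Subobject.pullback p).obj := fun s t h =>
    le_antisymm (Subobject.le_of_pullback_obj_le p h.le) (Subobject.le_of_pullback_obj_le p h.ge)
  exact (isNoetherianObject.is_iff N).2
    ((Subobject.pullback p).monotone.strictMono_of_injective hinj).wellFoundedGT

lemma mem_aprime_of_prec {X Y : C} [IsNoetherianObject X] (h : Prec C X Y)
    (hY : Y ∈ Aprime C) : X ∈ Aprime C :=
  ⟨inferInstance, fun x ⟨P, hP, hPX⟩ => hY.2 x ⟨P, hP, hPX.trans h⟩⟩

lemma mem_aprime_of_mono {X Y : C} (f : X ⟶ Y) [Mono f] (hY : Y ∈ Aprime C) :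
    X ∈ Aprime C :=
  have := hY.1
  have := isNoetherianObject_of_mono f
  mem_aprime_of_prec (prec_of_mono f) hY

lemma mem_aprime_of_epi {X Y : C} (f : X ⟶ Y) [Epi f] (hX : X ∈ Aprime C) :
    Y ∈ Aprime C :=
  have := hX.1
  have := isNoetherianObject_of_epi f
  mem_aprime_of_prec (prec_of_epi f) hX

lemma exists_hom_ne_zero_of_mem_aprime (hass : HasAssociatedPoints C) {M W : C}
    (hM : M ∈ Aprime C) (hW : ¬ IsZero W) (hWM : Prec C W M) : ∃ f : M ⟶ W, f ≠ 0 := by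
  obtain ⟨x, P, hP, q, hq⟩ := hass W hW
  have hx : x ∈ supp C M := ⟨P, hP, (prec_of_mono q).trans hWM⟩
  obtain ⟨g, hg⟩ := hM.2 x hx P hP M hM.1 hx
  exact ⟨g ≫ q, fun h => hg (zero_of_comp_mono q h)⟩

lemma isShortExact_kernel_ι {A B : C} (g : A ⟶ B) [Epi g] : IsShortExact C (kernel.ι g) g :=
  ⟨kernel.condition g, .mk' (ShortComplex.exact_of_f_is_kernel _ (kernelIsKernel g))
    (inferInstanceAs (Mono (kernel.ι g))) (inferInstanceAs (Epi g))⟩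

noncomputable def cokernelBotArrowIso (M : C) : cokernel (⊥ : Subobject M).arrow ≅ M :=
  cokernelIsoOfEq Subobject.bot_arrow ≪≫ cokernelZeroIsoTarget

noncomputable def cokernelKernelSubobjectArrowIso {M N : C} (e : M ⟶ N) [Epi e] :
    cokernel (kernelSubobject e).arrow ≅ N :=
  cokernelIsoOfEq (kernelSubobject_arrow e).symm ≪≫ cokernelEpiComp _ _ ≪≫
    (cokernelIsCokernel (kernel.ι e)).coconePointUniqueUpToIso
      (Abelian.epiIsCokernelOfKernel (KernelFork.ofι (kernel.ι e) (kernel.condition e))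
        (kernelIsKernel e))

/-- `kernelSubobject (cokernel.π I.arrow ≫ cokernel.π u)` is the preimage in `N` of the image
of `u`. -/
lemma eq_zero_of_kernelSubobject_le {N Z : C} {I : Subobject N} (u : Z ⟶ cokernel I.arrow)
    (h : kernelSubobject (cokernel.π I.arrow ≫ cokernel.π u) ≤ I) : u = 0 := by
  have hK : (kernelSubobject (cokernel.π I.arrow ≫ cokernel.π u)).arrow ≫
      cokernel.π I.arrow = 0 := by
    rw [← Subobject.ofLE_arrow h, Category.assoc, cokernel.condition, comp_zero]
  have hfst : pullback.fst (cokernel.π I.arrow) u ≫ cokernel.π I.arrow ≫ cokernel.π u = 0 := by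
    rw [pullback.condition_assoc, cokernel.condition, comp_zero]
  have hfst' : pullback.fst (cokernel.π I.arrow) u ≫ cokernel.π I.arrow = 0 := by
    rw [← Subobject.factorThru_arrow _ _ (kernelSubobject_factors _ _ hfst), Category.assoc, hK,
      comp_zero]
  apply zero_of_epi_comp (pullback.snd (cokernel.π I.arrow) u)
  rw [← pullback.condition, hfst']

lemma lt_kernelSubobject_of_ne_zero {N Z : C} (I : Subobject N) {u : Z ⟶ cokernel I.arrow}
    (hu : u ≠ 0) : I < kernelSubobject (cokernel.π I.arrow ≫ cokernel.π u) :=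
  lt_of_le_not_ge (le_kernelSubobject _ _ (by rw [cokernel.condition_assoc, zero_comp]))
    (fun h => hu (eq_zero_of_kernelSubobject_le u h))

variable {𝒞 : Set C}

lemma IsTorsionClassIn.mem_of_prec (hass : HasAssociatedPoints C) (h𝒞 : 𝒞 ⊆ Aprime C)
    (hrep : ∀ X Y : C, X ∈ 𝒞 → Nonempty (X ≅ Y) → Y ∈ 𝒞)
    (htor : IsTorsionClassIn C (Aprime C) 𝒞) {M N : C} (hM : M ∈ 𝒞) (hN : N ∈ Aprime C)
    (hNM : Prec C N M) : N ∈ 𝒞 := by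
  obtain ⟨hzero, hquot, hext⟩ := htor
  have := hN.1
  suffices ∀ I : Subobject N, cokernel I.arrow ∈ 𝒞 from hrep _ _ (this ⊥) ⟨cokernelBotArrowIso N⟩
  intro I
  induction I using WellFoundedGT.induction with | ind I IH
  have hNI : cokernel I.arrow ∈ Aprime C := mem_aprime_of_epi (cokernel.π I.arrow) hN
  by_cases hz : IsZero (cokernel I.arrow)
  · exact hzero _ hz
  obtain ⟨f, hf⟩ := exists_hom_ne_zero_of_mem_aprime hass (h𝒞 hM) hz
    ((prec_of_epi (cokernel.π I.arrow)).trans hNM)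
  have himage : Abelian.image f ∈ 𝒞 := hquot _ _ (Abelian.factorThruImage f) inferInstance hM
    (mem_aprime_of_mono (Abelian.image.ι f) hNI)
  have hcoker : cokernel f ∈ 𝒞 := hrep _ _ (IH _ (lt_kernelSubobject_of_ne_zero I hf))
    ⟨cokernelKernelSubobjectArrowIso _⟩
  exact hext _ _ _ _ _ (isShortExact_kernel_ι (cokernel.π f)) himage hcoker hNI

lemma mem_of_epi_of_cokernel_closed (hass : HasAssociatedPoints C) (h𝒞 : 𝒞 ⊆ Aprime C)
    (hrep : ∀ X Y : C, X ∈ 𝒞 → Nonempty (X ≅ Y) → Y ∈ 𝒞)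
    (hcok : ∀ (X Y : C) (f : X ⟶ Y), X ∈ 𝒞 → Y ∈ 𝒞 → cokernel f ∈ 𝒞)
    {M N : C} (e : M ⟶ N) [Epi e] (hM : M ∈ 𝒞) : N ∈ 𝒞 := by
  have := (h𝒞 hM).1
  suffices ∀ s : Subobject M, s ≤ kernelSubobject e → cokernel s.arrow ∈ 𝒞 → N ∈ 𝒞 from
    this ⊥ bot_le (hrep _ _ hM ⟨(cokernelBotArrowIso M).symm⟩)
  intro s
  induction s using WellFoundedGT.induction with | ind s IH
  intro hse hs
  let φ : cokernel s.arrow ⟶ N := cokernel.desc s.arrow e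
    (by rw [← Subobject.ofLE_arrow hse, Category.assoc, kernelSubobject_arrow_comp, comp_zero])
  have hπφ : cokernel.π s.arrow ≫ φ = e := cokernel.π_desc _ _ _
  have : Epi φ := epi_of_epi_fac hπφ
  by_cases hz : IsZero (kernel φ)
  · have : Mono φ := Preadditive.mono_of_kernel_zero (hz.eq_of_src _ _)
    have : IsIso φ := isIso_of_mono_of_epi φ
    exact hrep _ _ hs ⟨asIso φ⟩
  obtain ⟨g, hg⟩ :=
    exists_hom_ne_zero_of_mem_aprime hass (h𝒞 hs) hz (prec_of_mono (kernel.ι φ))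
  have hu : g ≫ kernel.ι φ ≠ 0 := fun h => hg (zero_of_comp_mono _ h)
  have hle : kernelSubobject (cokernel.π s.arrow ≫ cokernel.π (g ≫ kernel.ι φ)) ≤
      kernelSubobject e := by
    have hw : (g ≫ kernel.ι φ) ≫ φ = 0 := by rw [Category.assoc, kernel.condition, comp_zero]
    have he :
        e = (cokernel.π s.arrow ≫ cokernel.π (g ≫ kernel.ι φ)) ≫ cokernel.desc _ φ hw := by
      rw [Category.assoc, cokernel.π_desc, hπφ]
    rw [he]
    exact kernelSubobject_comp_le _ _
  exact IH _ (lt_kernelSubobject_of_ne_zero s hu) hle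
    (hrep _ _ (hcok _ _ _ hs hs) ⟨(cokernelKernelSubobjectArrowIso _).symm⟩)

end

theorem serre_tfae_torsion_thick_narrow
    (hass : HasAssociatedPoints C)
    (𝒞 : Set C) (h𝒞 : 𝒞 ⊆ Aprime C)
    (hrep : ∀ X Y : C, X ∈ 𝒞 → Nonempty (X ≅ Y) → Y ∈ 𝒞) :
    List.TFAE [IsSerreIn C (Aprime C) 𝒞, IsTorsionClassIn C (Aprime C) 𝒞,
      IsThickIn C (Aprime C) 𝒞, IsNarrowIn C (Aprime C) 𝒞] := by
  tfae_have 1 → 2 := fun ⟨hz, _, hq, he⟩ => ⟨hz, hq, he⟩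
  tfae_have 2 → 3 := by
    intro htor
    refine ⟨htor.1, fun X Y f hX _ => ?_, fun X Y f _ hY => ?_, htor.2.2⟩
    · exact htor.mem_of_prec hass h𝒞 hrep hX (mem_aprime_of_mono (kernel.ι f) (h𝒞 hX))
        (prec_of_mono (kernel.ι f))
    · exact htor.2.1 _ _ (cokernel.π f) inferInstance hY
        (mem_aprime_of_epi (cokernel.π f) (h𝒞 hY))
  tfae_have 3 → 4 := fun ⟨hz, _, hc, he⟩ => ⟨hz, hc, he⟩
  tfae_have 4 → 1 := by
    rintro ⟨hz, hc, he⟩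
    have htor : IsTorsionClassIn C (Aprime C) 𝒞 :=
      ⟨hz, fun X Y f hf hX _ => have := hf
        mem_of_epi_of_cokernel_closed hass h𝒞 hrep hc f hX, he⟩
    exact ⟨hz, fun X Y f _ hY hX => htor.mem_of_prec hass h𝒞 hrep hY hX (prec_of_mono f),
      htor.2.1, he⟩
  tfae_finish

end RosenbergSpec
end

section
/- Let A be a locally noetherian Grothendieck category in which every nonzero object has an associated point. If M and N are objects of A with Hom_A(M,N) ≠ 0, then Supp(M) ∩ Ass(N) ≠ ∅. -/
/-!
Common set-up: Rosenberg's spectrum of an abelian category.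

For objects `X Y` of an abelian category `C`, `X ≺ Y` means that `X` is a subquotient of a
finite direct sum of copies of `Y`; `X ≈ Y` means `X ≺ Y ≺ X`.  A nonzero object `P` is
*spectral* if it is `≈`-equivalent to each of its nonzero subobjects, and the spectrum
`𝔖pec(C)` is the collection of `≈`-equivalence classes `⟨P⟩` of spectral objects.
`Supp(M) = {⟨P⟩ : P ≺ M}` and `Ass(M) = {⟨P⟩ : some spectral object of class ⟨P⟩ embeds in M}`.
-/

open CategoryTheory CategoryTheory.Limits

attribute [local instance] CategoryTheory.Abelian.hasFiniteBiproducts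
attribute [local instance] CategoryTheory.Limits.hasBinaryBiproducts_of_finite_biproducts

universe v u

namespace RosenbergSpec

variable {C : Type u} [Category.{v} C] [Abelian C]

lemma Prec.of_mono_of_epi {X Y S : C} (ι : S ⟶ Y) (π : S ⟶ X) [Mono ι] [Epi π] :
    Prec C X Y :=
  ⟨1, one_pos, S, ι ≫ biproduct.ι (fun _ : Fin 1 => Y) 0, π, mono_comp _ _, inferInstance⟩

lemma Prec.of_mono_of_epi_to {X Y Q : C} (i : X ⟶ Q) (p : Y ⟶ Q) [Mono i] [Epi p] :
    Prec C X Y :=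
  Prec.of_mono_of_epi (pullback.fst p i) (pullback.snd p i)

lemma ass_subset_supp_of_epi {M Q : C} (p : M ⟶ Q) [Epi p] : ass C Q ⊆ supp C M := by
  rintro x ⟨P, rfl, i, hi⟩
  exact ⟨P, rfl, Prec.of_mono_of_epi_to i p⟩

lemma ass_subset_of_mono {K N : C} (i : K ⟶ N) [Mono i] : ass C K ⊆ ass C N := by
  rintro x ⟨P, rfl, j, hj⟩
  exact ⟨P, rfl, j ≫ i, mono_comp _ _⟩

lemma not_isZero_image_of_ne_zero {M N : C} {f : M ⟶ N} (hf : f ≠ 0) :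
    ¬ IsZero (image f) :=
  fun hz => nonzero_image_of_nonzero hf (hz.eq_of_src _ _)

theorem supp_inter_ass_nonempty_of_hom_ne_zero_general
    (A : Type u) [Category.{v} A] [Abelian A]
    (hass : HasAssociatedPoints A)
    (M N : A) (h : ∃ f : M ⟶ N, f ≠ 0) :
    (supp A M ∩ ass A N).Nonempty := by
  obtain ⟨f, hf⟩ := h
  obtain ⟨x, hx⟩ := hass (image f) (not_isZero_image_of_ne_zero hf)
  exact ⟨x, ass_subset_supp_of_epi (factorThruImage f) hx, ass_subset_of_mono (image.ι f) hx⟩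

/-- Let `A` be a locally noetherian Grothendieck category in which every
nonzero object has an associated point.  If `Hom(M, N) ≠ 0` then
`Supp(M) ∩ Ass(N) ≠ ∅`. -/
theorem supp_inter_ass_nonempty_of_hom_ne_zero
    (A : Type u) [Category.{v} A] [Abelian A] [HasColimits A] [AB5 A]
    (hln : LocallyNoetherian A) (hass : HasAssociatedPoints A)
    (M N : A) (h : ∃ f : M ⟶ N, f ≠ 0) :
    (supp A M ∩ ass A N).Nonempty :=
  supp_inter_ass_nonempty_of_hom_ne_zero_general A hass M N h

end RosenbergSpec
end
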